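/- arXiv:2605.22745 — 5 statements merged into one kernel-verified Lean document; each statement's English description precedes it below -/
import Mathlib

section
/- Let ξ be an n×n matrix whose entries ξ_{i,j} are the n² generators of the exterior (Grassmann) algebra Λ(V) on a vector space V of dimension n² over a field of characteristic 0. Then tr(ξ^{2k}) = 0 for all positive integers k. -/
/-!
Every entry of `ξ` is odd, hence so is every entry of `ξ ^ (2k-1)`, and in the exterior algebra
a vector anticommutes with odd elements. Therefore
`tr(ξ^{2k}) = tr(ξ · ξ^{2k-1}) = -tr(ξ^{2k-1} · ξ) = -tr(ξ^{2k})`, and `2` is invertible.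
-/

/-- The generic `n × n` Grassmann matrix: the matrix whose `(i,j)` entry is the generator
`ξ_{i,j}` of the exterior algebra on an `n²`-dimensional vector space with basis indexed by
pairs `(i,j)`. -/
noncomputable def genericGrassmannMatrix (F : Type*) [Field F] (n : ℕ) :
    Matrix (Fin n) (Fin n) (ExteriorAlgebra F ((Fin n × Fin n) → F)) :=
  fun i j => ExteriorAlgebra.ι F (Pi.single (i, j) 1)

namespace Matrix

variable {n R : Type*} [Fintype n]

theorem trace_mul_anticomm [NonUnitalNonAssocRing R] {A B : Matrix n n R}
    (h : ∀ i j, A i j * B j i = -(B j i * A i j)) : (A * B).trace = -(B * A).trace := by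
  simp only [trace, diag, mul_apply, h, Finset.sum_neg_distrib]
  rw [Finset.sum_comm]

theorem pow_apply_mem_graded {ι σ : Type*} [DecidableEq n] [AddMonoid ι] [Semiring R]
    [SetLike σ R] [AddSubmonoidClass σ R] (𝒜 : ι → σ) [SetLike.GradedMonoid 𝒜]
    {A : Matrix n n R} {a : ι} (hA : ∀ i j, A i j ∈ 𝒜 a) (m : ℕ) (i j : n) :
    (A ^ m) i j ∈ 𝒜 (m • a) := by
  induction m generalizing i j with
  | zero =>
    rw [pow_zero, one_apply, zero_smul]
    split_ifs
    exacts [SetLike.one_mem_graded 𝒜, zero_mem _]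
  | succ m ih =>
    rw [pow_succ, mul_apply, succ_nsmul]
    exact sum_mem fun l _ => SetLike.mul_mem_graded (ih i l) (hA l j)

end Matrix

namespace ExteriorAlgebra

open CliffordAlgebra

theorem ι_mul_eq_neg_mul_ι_of_mem_odd {R M : Type*} [CommRing R] [AddCommGroup M] [Module R M]
    (v : M) {b : ExteriorAlgebra R M} (hb : b ∈ evenOdd (0 : QuadraticForm R M) 1) :
    ι R v * b = -(b * ι R v) := by
  have anticomm (w : M) : ι R v * ι R w = -(ι R w * ι R v) :=
    eq_neg_of_add_eq_zero_left (ι_add_mul_swap v w)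
  induction b, hb using odd_induction with
  | ι w => exact anticomm w
  | add x y _ _ ihx ihy => rw [mul_add, add_mul, ihx, ihy, neg_add]
  | ι_mul_ι_mul m₁ m₂ x _ ih =>
    have hcomm : Commute (ι R v) (ι R m₁ * ι R m₂) := by
      rw [Commute, SemiconjBy, ← mul_assoc, anticomm, neg_mul, mul_assoc, anticomm, mul_neg,
        neg_neg, mul_assoc]
    rw [hcomm.left_comm, ih, mul_neg, ← mul_assoc]

theorem trace_map_ι_pow_even_eq_zero {F M n : Type*} [Field F] [CharZero F] [AddCommGroup M]
    [Module F M] [Fintype n] [DecidableEq n] (V : Matrix n n M) {k : ℕ} (hk : 0 < k) :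
    ((V.map (ι F)) ^ (2 * k)).trace = 0 := by
  obtain ⟨j, rfl⟩ : ∃ j, k = j + 1 := ⟨k - 1, by omega⟩
  set A := V.map (ι F)
  have hodd (i l : n) : (A ^ (2 * j + 1)) i l ∈ evenOdd (0 : QuadraticForm F M) 1 := by
    have := A.pow_apply_mem_graded _ (fun i l => ι_mem_evenOdd_one _ (V i l)) (2 * j + 1) i l
    rwa [nsmul_one, ZMod.natCast_eq_one_iff_odd.mpr (odd_two_mul_add_one j)] at this
  have hpow : 2 * (j + 1) = 2 * j + 1 + 1 := by ring
  have hneg : (A ^ (2 * (j + 1))).trace = -(A ^ (2 * (j + 1))).trace := by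
    calc (A ^ (2 * (j + 1))).trace = (A * A ^ (2 * j + 1)).trace := by rw [hpow, pow_succ']
      _ = -(A ^ (2 * j + 1) * A).trace :=
        Matrix.trace_mul_anticomm fun i l => ι_mul_eq_neg_mul_ι_of_mem_odd _ (hodd l i)
      _ = -(A ^ (2 * (j + 1))).trace := by rw [← pow_succ, ← hpow]
  have := IsAddTorsionFree.of_isTorsionFree F (ExteriorAlgebra F M)
  exact self_eq_neg.mp hneg

end ExteriorAlgebra

/-- For the generic Grassmann matrix `ξ` over a field of characteristic zero,
`tr(ξ^{2k}) = 0` for every positive integer `k`. -/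
theorem trace_even_power_genericGrassmannMatrix_eq_zero
    (F : Type*) [Field F] [CharZero F] (n : ℕ) (k : ℕ) (hk : 0 < k) :
    ((genericGrassmannMatrix F n) ^ (2 * k)).trace = 0 :=
  ExteriorAlgebra.trace_map_ι_pow_even_eq_zero (fun i j => Pi.single (i, j) 1) hk
end

section
/- Every permutation γ ∈ S_p (with p ≥ m) can be written as a product γ = α ∘ β where α ∈ S_m (i.e. α fixes every point greater than m) and each cycle of β contains at most one element of {1, 2, …, m}. -/
/-!
Add the points of `{0, …, m-1}` one at a time to the set of points kept in separate cycles
of `β`. If the `β`-cycle of a new point `x` already contains an earlier point `j`, replace `β` by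
`swap x j * β` and `α` by `α * swap x j`: left multiplication by this transposition splits that
cycle into one through `x` and one through `j`, and merges no cycles.
-/

open Equiv Set

namespace Equiv.Perm

variable {α : Type*}

theorem sameCycle_swap_mul_apply [DecidableEq α] {β : Perm α} {x y : α} (hxy : β.SameCycle x y)
    (z : α) : β.SameCycle z ((swap x y * β) z) := by
  have hz : β.SameCycle z (β z) := SameCycle.rfl.apply_right
  rw [mul_apply, swap_apply_def]
  split_ifs with hx hy
  · exact hz.trans (hx ▸ hxy)
  · exact hz.trans (hy ▸ hxy.symm)
  · exact hz

variable [Finite α]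

theorem SameCycle.mem_of_mapsTo {σ : Perm α} {s : Set α} (hs : MapsTo σ s s) {x y : α}
    (h : σ.SameCycle x y) (hx : x ∈ s) : y ∈ s := by
  obtain ⟨k, rfl⟩ := h.exists_nat_pow_eq
  exact hs.perm_pow k hx

theorem SameCycle.of_forall_sameCycle_apply {σ τ : Perm α} (hστ : ∀ z, τ.SameCycle z (σ z))
    {x y : α} (h : σ.SameCycle x y) : τ.SameCycle x y :=
  h.mem_of_mapsTo (s := {z | τ.SameCycle x z}) (fun z hz => SameCycle.trans hz (hστ z))
    SameCycle.rfl

theorem SameCycle.of_swap_mul [DecidableEq α] {β : Perm α} {x y a b : α}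
    (h : (swap x y * β).SameCycle a b) (hxy : β.SameCycle x y) : β.SameCycle a b :=
  h.of_forall_sameCycle_apply (sameCycle_swap_mul_apply hxy)

/-- The orbit of `x` under `swap x y * β` is the arc `x, β x, …, β⁻¹ y` of its `β`-cycle. -/
theorem not_sameCycle_swap_mul [DecidableEq α] {β : Perm α} {x y : α} (hne : x ≠ y)
    (hxy : β.SameCycle x y) : ¬(swap x y * β).SameCycle x y := by
  have hk : ∃ k, (β ^ k) x = y := hxy.exists_nat_pow_eq
  set k := Nat.find hk
  have hmin : ∀ i < k, (β ^ i) x ≠ y := fun i hi => Nat.find_min hk hi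
  have hk0 : 0 < k := (Nat.find_pos hk).2 fun h0 => hne (by simpa using h0)
  have harc : MapsTo (swap x y * β) {z | ∃ i < k, (β ^ i) x = z}
      {z | ∃ i < k, (β ^ i) x = z} := by
    rintro _ ⟨i, hi, rfl⟩
    rw [mul_apply, ← mul_apply β, ← pow_succ']
    obtain hlt | heq : i + 1 < k ∨ i + 1 = k := by omega
    · have hret : (β ^ (i + 1)) x ≠ x := fun h => hmin (k - (i + 1)) (by omega) <| calc
        (β ^ (k - (i + 1))) x = (β ^ (k - (i + 1))) ((β ^ (i + 1)) x) := by rw [h]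
        _ = (β ^ k) x := by rw [← mul_apply, ← pow_add, Nat.sub_add_cancel hlt.le]
        _ = y := Nat.find_spec hk
      rw [swap_apply_of_ne_of_ne hret (hmin _ hlt)]
      exact ⟨i + 1, hlt, rfl⟩
    · rw [heq, Nat.find_spec hk, swap_apply_right]
      exact ⟨0, hk0, rfl⟩
  intro h
  obtain ⟨i, hi, hiy⟩ := h.mem_of_mapsTo harc ⟨0, hk0, rfl⟩
  exact hmin i hi hiy

theorem pairwise_not_sameCycle_insert_swap_mul [DecidableEq α] {β : Perm α} {s : Set α}
    (hs : s.Pairwise fun i j => ¬β.SameCycle i j) {x j : α} (hx : x ∉ s) (hj : j ∈ s)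
    (hxj : β.SameCycle x j) : (insert x s).Pairwise fun u v => ¬(swap x j * β).SameCycle u v := by
  have hne : x ≠ j := ne_of_mem_of_not_mem hj hx |>.symm
  have hsplit : ∀ v ∈ s, ¬(swap x j * β).SameCycle x v := by
    intro v hv h
    obtain rfl : v = j := by
      by_contra hvj
      exact hs hv hj hvj ((h.of_swap_mul hxj).symm.trans hxj)
    exact not_sameCycle_swap_mul hne hxj h
  exact (hs.mono' fun u v huv h => huv (h.of_swap_mul hxj)).insert_of_notMem hx
    fun v hv => ⟨hsplit v hv, fun h => hsplit v hv h.symm⟩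

theorem exists_eq_mul_pairwise_not_sameCycle (s : Finset α) (γ : Perm α) :
    ∃ a b : Perm α, γ = a * b ∧ (∀ i ∉ s, a i = i) ∧
      (s : Set α).Pairwise fun i j => ¬b.SameCycle i j := by
  classical
  induction s using Finset.induction_on with
  | empty => exact ⟨1, γ, (one_mul γ).symm, fun _ _ => rfl, by simp⟩
  | insert x s hxs ih =>
    obtain ⟨a, b, rfl, ha, hb⟩ := ih
    rw [Finset.coe_insert]
    by_cases hcyc : ∃ j ∈ s, b.SameCycle x j
    · obtain ⟨j, hjs, hxj⟩ := hcyc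
      refine ⟨a * swap x j, swap x j * b, by rw [mul_assoc, swap_mul_self_mul], ?_,
        pairwise_not_sameCycle_insert_swap_mul hb hxs hjs hxj⟩
      intro i hi
      rw [Finset.mem_insert, not_or] at hi
      rw [mul_apply, swap_apply_of_ne_of_ne hi.1 (ne_of_mem_of_not_mem hjs hi.2).symm]
      exact ha i hi.2
    · push Not at hcyc
      exact ⟨a, b, rfl, fun i hi => ha i fun h => hi (Finset.mem_insert_of_mem h),
        hb.insert_of_notMem hxs fun v hv => ⟨hcyc v hv, fun h => hcyc v hv h.symm⟩⟩

end Equiv.Perm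

theorem perm_factorization_general (p m : ℕ) (γ : Equiv.Perm (Fin p)) :
    ∃ α β : Equiv.Perm (Fin p),
      γ = α * β ∧
      (∀ i : Fin p, m ≤ (i : ℕ) → α i = i) ∧
      (∀ i j : Fin p, (i : ℕ) < m → (j : ℕ) < m → β.SameCycle i j → i = j) := by
  obtain ⟨α, β, hγ, hα, hβ⟩ :=
    Equiv.Perm.exists_eq_mul_pairwise_not_sameCycle {i : Fin p | (i : ℕ) < m} γ
  refine ⟨α, β, hγ, fun i hi => hα i (by simpa using hi), fun i j hi hj hij => ?_⟩
  by_contra hne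
  exact hβ (by simpa using hi) (by simpa using hj) hne hij

/-- Every permutation `γ ∈ S_p` (with `m ≤ p`) factors as `γ = α ∘ β` where `α` fixes
every point of index `≥ m` (so `α ∈ S_m`), and every cycle of `β` contains at most one
element of `{0, 1, …, m-1}`; i.e. any two elements of `{0,…,m-1}` lying in the same
`β`-cycle coincide. -/
theorem perm_factorization (p m : ℕ) (hm : m ≤ p) (γ : Equiv.Perm (Fin p)) :
    ∃ α β : Equiv.Perm (Fin p),
      γ = α * β ∧
      (∀ i : Fin p, m ≤ (i : ℕ) → α i = i) ∧
      (∀ i j : Fin p, (i : ℕ) < m → (j : ℕ) < m → β.SameCycle i j → i = j) :=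
  perm_factorization_general p m γ
end

section
/- For m ≤ n, the map from the group algebra ℂ[S_m] to End((ℂⁿ)^{⊗m}) given by the place-permutation action σ(v₁⊗⋯⊗v_m) = v_{σ⁻¹(1)}⊗⋯⊗v_{σ⁻¹(m)} is injective. -/
/-!
Fix an injection `f : Fin m ↪ Fin n` and the pure tensor `e = e_{f 1} ⊗ ⋯ ⊗ e_{f m}` of distinct
standard basis vectors. Then `σ • e = e_{f σ⁻¹(1)} ⊗ ⋯ ⊗ e_{f σ⁻¹(m)}` are pure tensors of basis
vectors indexed by pairwise different words, so the coordinate of `x • e` at the word of `τ` is the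
coefficient of `τ` in `x`. Hence `x` is recovered from its image.
-/

open scoped TensorProduct

/-- The place-permutation action of `S_m` on `(ℂⁿ)^{⊗m}`:
`σ • (v₁ ⊗ ⋯ ⊗ v_m) = v_{σ⁻¹(1)} ⊗ ⋯ ⊗ v_{σ⁻¹(m)}`. -/
noncomputable def placePermHom (n m : ℕ) :
    Equiv.Perm (Fin m) →* Module.End ℂ (⨂[ℂ] _ : Fin m, (Fin n → ℂ)) where
  toFun σ := (PiTensorProduct.reindex ℂ (fun _ : Fin m => (Fin n → ℂ)) σ).toLinearMap
  map_one' := by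
    ext f
    simp only [Module.End.one_apply, LinearMap.compMultilinearMap_apply,
      MultilinearMap.compLinearMap_apply, LinearEquiv.coe_coe, PiTensorProduct.reindex_tprod]
    congr 1
  map_mul' σ τ := by
    ext f
    simp only [Module.End.mul_apply, LinearEquiv.coe_coe,
      LinearMap.compMultilinearMap_apply, MultilinearMap.compLinearMap_apply,
      PiTensorProduct.reindex_tprod]
    rfl

/-- The induced algebra map `ℂ[S_m] → End((ℂⁿ)^{⊗m})`. -/
noncomputable def placePermAlgHom (n m : ℕ) :
    MonoidAlgebra ℂ (Equiv.Perm (Fin m)) →ₐ[ℂ] Module.End ℂ (⨂[ℂ] _ : Fin m, (Fin n → ℂ)) :=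
  MonoidAlgebra.lift ℂ _ (Equiv.Perm (Fin m)) (placePermHom n m)

namespace PiTensorProduct

variable {R ι κ : Type*} [CommSemiring R] [Fintype ι]

noncomputable def coordProd (g : ι → κ) : (⨂[R] _ : ι, (κ → R)) →ₗ[R] R :=
  lift ((MultilinearMap.mkPiAlgebra R ι R).compLinearMap fun i => LinearMap.proj (g i))

@[simp]
theorem coordProd_tprod (g : ι → κ) (v : ι → κ → R) :
    coordProd g (tprod R v) = ∏ i, v i (g i) := by
  simp [coordProd]

theorem coordProd_tprod_single [DecidableEq κ] (g h : ι → κ) :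
    coordProd g (tprod R fun i => Pi.single (h i) (1 : R)) = if h = g then 1 else 0 := by
  simp [Pi.single_apply, Fintype.prod_boole, funext_iff, eq_comm]

end PiTensorProduct

open PiTensorProduct

theorem placePermHom_tprod (n m : ℕ) (σ : Equiv.Perm (Fin m)) (v : Fin m → Fin n → ℂ) :
    placePermHom n m σ (tprod ℂ v) = tprod ℂ fun i => v (σ⁻¹ i) :=
  reindex_tprod σ v

theorem coordProd_placePermAlgHom_tprod_single {n m : ℕ} (f : Fin m ↪ Fin n)
    (x : MonoidAlgebra ℂ (Equiv.Perm (Fin m))) (τ : Equiv.Perm (Fin m)) :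
    coordProd (fun i => f (τ⁻¹ i)) (placePermAlgHom n m x (tprod ℂ fun i => Pi.single (f i) 1)) =
      x.coeff τ := by
  induction x using MonoidAlgebra.induction_linear with
  | zero => simp
  | add x y hx hy =>
    rw [map_add, LinearMap.add_apply, map_add, hx, hy, MonoidAlgebra.coeff_add, Finsupp.add_apply]
  | single σ c =>
    have hword : (fun i => f (σ⁻¹ i)) = (fun i => f (τ⁻¹ i)) ↔ σ = τ := by
      simpa only [Function.comp_def, DFunLike.coe_fn_eq, inv_inj] using
        f.injective.comp_left.eq_iff (a := ⇑σ⁻¹) (b := ⇑τ⁻¹)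
    rw [placePermAlgHom, MonoidAlgebra.lift_single, LinearMap.smul_apply, placePermHom_tprod,
      map_smul, coordProd_tprod_single, MonoidAlgebra.coeff_single, Finsupp.single_apply]
    simp only [hword, smul_eq_mul, mul_ite, mul_one, mul_zero]

/-- For `m ≤ n`, the map `ℂ[S_m] → End((ℂⁿ)^{⊗m})` given by the place-permutation action
is injective. -/
theorem placePermAlgHom_injective (n m : ℕ) (h : m ≤ n) :
    Function.Injective (placePermAlgHom n m) := by
  intro x y hxy
  ext τ
  rw [← coordProd_placePermAlgHom_tprod_single (Fin.castLEEmb h) x τ, hxy,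
    coordProd_placePermAlgHom_tprod_single]
end

section
/- The number of permutations in S_m having no descending subsequence of length 3 (i.e. 3-good permutations, avoiding the pattern 321) equals the m-th Catalan number C_m = (1/(m+1))·binom(2m, m). -/
/-!
A permutation `σ` is encoded by its prefix maxima `t i = max (σ 0, …, σ i)`, a monotone map with
`i ≤ t i` (a stair). If `σ` avoids 321, every entry that is not a new prefix maximum is the least
value not used so far: a smaller unused value would occur later and complete a 321 pattern. So `σ`
is recovered greedily from `t`, and conversely the greedy permutation built from any stair avoids
321 and has prefix maxima `t`. Splitting a stair on `n + 1` points at its first fixed point `k`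
leaves stairs on `k` and on `n - k` points, which is the Catalan recursion.
-/

open Finset

variable {m : ℕ}

def Avoids321 {α : Type*} [LT α] (f : Fin m → α) : Prop :=
  ¬ ∃ i₁ i₂ i₃ : Fin m, i₁ < i₂ ∧ i₂ < i₃ ∧ f i₃ < f i₂ ∧ f i₂ < f i₁

def IsStair (t : Fin m → Fin m) : Prop :=
  Monotone t ∧ ∀ i, i ≤ t i

abbrev Stair (m : ℕ) := {t : Fin m → Fin m // IsStair t}

namespace IsStair

variable {t : Fin m → Fin m} (ht : IsStair t)
include ht

lemma le_apply_mk (i : ℕ) (hi : i < m) : i ≤ t ⟨i, hi⟩ :=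
  ht.2 ⟨i, hi⟩

lemma apply_mk_mono {i j : ℕ} (hi : i < m) (hj : j < m) (hij : i ≤ j) :
    (t ⟨i, hi⟩ : ℕ) ≤ t ⟨j, hj⟩ :=
  ht.1 (Fin.le_def.mpr hij)

end IsStair

namespace Stair

variable {n : ℕ}

lemma apply_last (t : Stair (n + 1)) : t.1 (Fin.last n) = Fin.last n :=
  le_antisymm (Fin.le_last _) (t.2.2 _)

def firstFixedPoint (t : Stair (n + 1)) : Fin (n + 1) :=
  (univ.filter fun k => t.1 k = k).min' ⟨Fin.last n, by simp [apply_last]⟩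

lemma apply_firstFixedPoint (t : Stair (n + 1)) : t.1 (firstFixedPoint t) = firstFixedPoint t :=
  (mem_filter.mp (min'_mem (univ.filter fun k => t.1 k = k) _)).2

lemma lt_apply_of_lt_firstFixedPoint (t : Stair (n + 1)) {i : Fin (n + 1)}
    (hi : i < firstFixedPoint t) : i < t.1 i :=
  (t.2.2 i).lt_of_ne fun h =>
    (min'_le (univ.filter fun k => t.1 k = k) i (mem_filter.mpr ⟨mem_univ _, h.symm⟩)).not_gt hi

lemma firstFixedPoint_eq {t : Stair (n + 1)} {k : Fin (n + 1)} (hk : t.1 k = k)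
    (hlt : ∀ i < k, i < t.1 i) : firstFixedPoint t = k :=
  le_antisymm (min'_le (univ.filter fun k => t.1 k = k) k (mem_filter.mpr ⟨mem_univ _, hk⟩)) <|
    not_lt.mp fun h => (hlt _ h).ne (apply_firstFixedPoint t).symm

section Glue

variable (k : Fin (n + 1))

def glue (t₁ : Stair k) (t₂ : Stair (n - k)) (i : Fin (n + 1)) : Fin (n + 1) :=
  if h : (i : ℕ) < k then ⟨(t₁.1 ⟨i, h⟩ : ℕ) + 1, by
    have := (t₁.1 ⟨i, h⟩).isLt; have := k.isLt; omega⟩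
  else if h' : (i : ℕ) = k then k
  else ⟨(k : ℕ) + 1 + t₂.1 ⟨i - (k + 1), by have := i.isLt; omega⟩, by
    have := (t₂.1 ⟨i - (k + 1), by have := i.isLt; omega⟩).isLt; omega⟩

variable {k} (t₁ : Stair k) (t₂ : Stair (n - k))

lemma glue_of_lt {i : Fin (n + 1)} (hi : (i : ℕ) < k) :
    (glue k t₁ t₂ i : ℕ) = t₁.1 ⟨i, hi⟩ + 1 := by
  rw [glue, dif_pos hi]

lemma glue_self : glue k t₁ t₂ k = k := by
  rw [glue, dif_neg (lt_irrefl _), dif_pos rfl]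

lemma glue_of_gt {i : Fin (n + 1)} (hi : (k : ℕ) < i) :
    (glue k t₁ t₂ i : ℕ) = k + 1 + t₂.1 ⟨i - (k + 1), by omega⟩ := by
  rw [glue, dif_neg (by omega), dif_neg (by omega)]

lemma glue_le {i : Fin (n + 1)} (hi : i ≤ k) : glue k t₁ t₂ i ≤ k := by
  rcases hi.lt_or_eq with hi | rfl
  · have := (t₁.1 ⟨i, hi⟩).isLt
    rw [Fin.le_def, glue_of_lt t₁ t₂ hi]
    omega
  · rw [glue_self]

lemma le_glue {i : Fin (n + 1)} (hi : k ≤ i) : k ≤ glue k t₁ t₂ i := by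
  rcases hi.lt_or_eq with hi | rfl
  · rw [Fin.le_def, glue_of_gt t₁ t₂ hi]
    omega
  · rw [glue_self]

lemma isStair_glue : IsStair (glue k t₁ t₂) := by
  refine ⟨fun i j hij => ?_, fun i => ?_⟩
  · rcases lt_or_ge i k with hi | hi
    · rcases lt_or_ge j k with hj | hj
      · rw [Fin.le_def, glue_of_lt t₁ t₂ hi, glue_of_lt t₁ t₂ hj]
        have := t₁.2.apply_mk_mono hi hj hij
        omega
      · exact (glue_le t₁ t₂ hi.le).trans (le_glue t₁ t₂ hj)
    · rcases hi.lt_or_eq with hi | rfl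
      · have hj := hi.trans_le hij
        rw [Fin.le_def, glue_of_gt t₁ t₂ hi, glue_of_gt t₁ t₂ hj]
        have := t₂.2.apply_mk_mono (i := i - (k + 1)) (j := j - (k + 1)) (by omega) (by omega)
          (by rw [Fin.le_def] at hij; omega)
        omega
      · exact (glue_self t₁ t₂).trans_le (le_glue t₁ t₂ hij)
  · rcases lt_trichotomy i k with hi | rfl | hi
    · have := t₁.2.le_apply_mk i hi
      rw [Fin.le_def, glue_of_lt t₁ t₂ hi]
      omega
    · rw [glue_self]
    · have := t₂.2.le_apply_mk (i - (k + 1)) (by omega)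
      rw [Fin.le_def, glue_of_gt t₁ t₂ hi]
      omega

lemma firstFixedPoint_glue : firstFixedPoint ⟨glue k t₁ t₂, isStair_glue t₁ t₂⟩ = k :=
  firstFixedPoint_eq (glue_self t₁ t₂) fun i hi => by
    have := t₁.2.le_apply_mk i hi
    rw [Fin.lt_def, glue_of_lt t₁ t₂ hi]
    omega

end Glue

section Split

variable {k : Fin (n + 1)} (t : Stair (n + 1)) (hk : firstFixedPoint t = k)
include hk

lemma lt_apply_mk_of_lt {i : ℕ} (hi : i < k) : i < t.1 ⟨i, by omega⟩ :=
  t.lt_apply_of_lt_firstFixedPoint (i := ⟨i, by omega⟩) (hk ▸ hi)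

lemma apply_mk_le {i : ℕ} (hi : i ≤ k) : (t.1 ⟨i, by omega⟩ : ℕ) ≤ k := by
  have hfix : t.1 k = k := hk ▸ apply_firstFixedPoint t
  have := t.2.apply_mk_mono (by omega) k.isLt hi
  rwa [Fin.eta, hfix] at this

/-- Left of its first fixed point `k`, a stair maps `i` into `(i, k]`. -/
def leftPart : Stair k :=
  ⟨fun i => ⟨t.1 ⟨i, by omega⟩ - 1, by
      have := apply_mk_le t hk i.isLt.le
      have := lt_apply_mk_of_lt t hk i.isLt
      omega⟩,
    fun i j hij => by
      have := t.2.apply_mk_mono (i := i) (j := j) (by omega) (by omega) hij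
      rw [Fin.le_def]; simp only; omega,
    fun i => by
      have := lt_apply_mk_of_lt t hk i.isLt
      rw [Fin.le_def]; simp only; omega⟩

end Split

def rightPart (t : Stair (n + 1)) (k : Fin (n + 1)) : Stair (n - k) :=
  ⟨fun j => ⟨t.1 ⟨k + 1 + j, by omega⟩ - (k + 1), by
      have := (t.1 ⟨k + 1 + j, by omega⟩).isLt
      have := t.2.le_apply_mk (k + 1 + j) (by omega)
      omega⟩,
    fun i j hij => by
      have := t.2.apply_mk_mono (i := k + 1 + i) (j := k + 1 + j) (by omega) (by omega)
        (by rw [Fin.le_def] at hij; omega)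
      rw [Fin.le_def]; simp only; omega,
    fun j => by
      have := t.2.le_apply_mk (k + 1 + j) (by omega)
      rw [Fin.le_def]; simp only; omega⟩

variable {k : Fin (n + 1)}

lemma glue_leftPart_rightPart (t : Stair (n + 1)) (hk : firstFixedPoint t = k) :
    glue k (leftPart t hk) (rightPart t k) = t.1 := by
  funext i
  apply Fin.ext
  rcases lt_trichotomy i k with hi | rfl | hi
  · have := lt_apply_mk_of_lt t hk hi
    rw [glue_of_lt _ _ hi]
    simp only [leftPart, Fin.eta] at this ⊢
    omega
  · rw [glue_self, ← hk, apply_firstFixedPoint]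
  · have := t.2.le_apply_mk i i.isLt
    rw [glue_of_gt _ _ hi]
    have hidx : k + 1 + (i - (k + 1)) = (i : ℕ) := by omega
    simp only [rightPart, hidx, Fin.eta] at this ⊢
    omega

lemma leftPart_glue (t₁ : Stair k) (t₂ : Stair (n - k)) :
    leftPart ⟨glue k t₁ t₂, isStair_glue t₁ t₂⟩ (firstFixedPoint_glue t₁ t₂) = t₁ := by
  ext i
  simp only [leftPart]
  rw [glue_of_lt t₁ t₂ (by simp)]
  simp

lemma rightPart_glue (t₁ : Stair k) (t₂ : Stair (n - k)) :
    rightPart ⟨glue k t₁ t₂, isStair_glue t₁ t₂⟩ k = t₂ := by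
  ext j
  simp only [rightPart]
  rw [glue_of_gt t₁ t₂ (by simp; omega)]
  simp

def fiberFirstFixedPointEquiv (k : Fin (n + 1)) :
    {t : Stair (n + 1) // firstFixedPoint t = k} ≃ Stair k × Stair (n - k) where
  toFun t := (leftPart t.1 t.2, rightPart t.1 k)
  invFun p := ⟨⟨glue k p.1 p.2, isStair_glue p.1 p.2⟩, firstFixedPoint_glue p.1 p.2⟩
  left_inv t := Subtype.ext <| Subtype.ext <| glue_leftPart_rightPart t.1 t.2
  right_inv p := Prod.ext (leftPart_glue p.1 p.2) (rightPart_glue p.1 p.2)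

end Stair

theorem card_stair (n : ℕ) : Nat.card (Stair n) = catalan n := by
  induction n using Nat.strong_induction_on with
  | _ n ih =>
  cases n with
  | zero =>
    rw [catalan_zero, Nat.card_eq_one_iff_unique]
    exact ⟨⟨fun _ _ => Subtype.ext (funext fun i => i.elim0)⟩, ⟨⟨id, monotone_id, le_refl⟩⟩⟩
  | succ n =>
    rw [← Nat.card_congr (Equiv.sigmaFiberEquiv Stair.firstFixedPoint), Nat.card_sigma,
      catalan_succ]
    refine sum_congr rfl fun k _ => ?_
    rw [Nat.card_congr (Stair.fiberFirstFixedPointEquiv k), Nat.card_prod, ih k (by omega),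
      ih (n - k) (by omega)]

section Greedy

variable {α : Type*} [Fintype α] [LinearOrder α] {s : Finset α} {v : α}

def nextValue (s : Finset α) (v : α) : α :=
  if h : v ∈ s ∧ sᶜ.Nonempty then sᶜ.min' h.2 else v

lemma nextValue_of_notMem (hv : v ∉ s) : nextValue s v = v :=
  dif_neg fun h => hv h.1

lemma nextValue_of_mem (hv : v ∈ s) (hs : sᶜ.Nonempty) : nextValue s v = sᶜ.min' hs :=
  dif_pos ⟨hv, hs⟩

lemma nextValue_notMem (hs : sᶜ.Nonempty) : nextValue s v ∉ s := by
  by_cases hv : v ∈ s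
  · rw [nextValue_of_mem hv hs]
    exact mem_compl.mp (min'_mem _ hs)
  · rwa [nextValue_of_notMem hv]

def IsGreedyFor (t g : Fin m → α) : Prop :=
  ∀ i, g i = nextValue ((Iio i).image g) (t i)

lemma IsGreedyFor.unique {t g g' : Fin m → α} (hg : IsGreedyFor t g) (hg' : IsGreedyFor t g') :
    g = g' := by
  funext i
  induction i using WellFoundedLT.induction with
  | _ i ih => rw [hg i, hg' i, image_congr fun j hj => ih j (mem_Iio.mp hj)]

def greedy (t : Fin m → α) : Fin m → α :=
  wellFounded_lt.fix fun i g =>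
    nextValue ((Iio i).attach.image fun j : Iio i => g j (mem_Iio.mp j.2)) (t i)

lemma isGreedyFor_greedy (t : Fin m → α) : IsGreedyFor t (greedy t) := by
  intro i
  rw [greedy, WellFounded.fix_eq]
  congr 1
  conv_rhs => rw [← attach_image_val (s := Iio i), image_image]
  rfl

end Greedy

section PrefixMax

variable {α : Type*} [LinearOrder α]

def prefixMax (f : Fin m → α) (i : Fin m) : α :=
  (Iic i).sup' nonempty_Iic f

lemma le_prefixMax (f : Fin m → α) {i j : Fin m} (h : j ≤ i) : f j ≤ prefixMax f i :=
  le_sup' f (mem_Iic.mpr h)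

lemma exists_eq_prefixMax (f : Fin m → α) (i : Fin m) : ∃ j ≤ i, f j = prefixMax f i := by
  obtain ⟨j, hj, h⟩ := exists_mem_eq_sup' nonempty_Iic f
  exact ⟨j, mem_Iic.mp hj, h.symm⟩

lemma monotone_prefixMax (f : Fin m → α) : Monotone (prefixMax f) :=
  fun _ _ h => sup'_mono f (Iic_subset_Iic.mpr h) nonempty_Iic

end PrefixMax

/-- The `i + 1` distinct values `σ 0, …, σ i` cannot all lie below `i`. -/
lemma isStair_prefixMax (σ : Equiv.Perm (Fin m)) : IsStair (prefixMax σ) := by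
  refine ⟨monotone_prefixMax σ, fun i => ?_⟩
  have hsub : (Iic i).image σ ⊆ Iic (prefixMax σ i) := fun y hy => by
    obtain ⟨j, hj, rfl⟩ := mem_image.mp hy
    exact mem_Iic.mpr (le_prefixMax σ (mem_Iic.mp hj))
  have hcard := card_le_card hsub
  rw [card_image_of_injective _ σ.injective, Fin.card_Iic, Fin.card_Iic] at hcard
  exact Fin.le_def.mpr (by omega)

lemma isGreedyFor_prefixMax {σ : Equiv.Perm (Fin m)} (hσ : Avoids321 ⇑σ) :
    IsGreedyFor (prefixMax σ) σ := by
  intro i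
  set used := (Iio i).image σ
  have hfresh : σ i ∈ usedᶜ := by
    simp [used, σ.injective.eq_iff]
  by_cases hmax : prefixMax σ i ∈ used
  · rw [nextValue_of_mem hmax ⟨_, hfresh⟩]
    refine le_antisymm (le_min' _ _ _ fun y hy => ?_) (min'_le _ _ hfresh)
    obtain ⟨j, hji, hj⟩ := mem_image.mp hmax
    have hij : σ i < σ j := (le_prefixMax σ le_rfl).trans_eq hj.symm |>.lt_of_ne
      (σ.injective.ne (mem_Iio.mp hji).ne')
    obtain ⟨k, rfl⟩ := σ.surjective y
    have hik : i ≤ k := not_lt.mp fun hki =>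
      mem_compl.mp hy (mem_image_of_mem σ (mem_Iio.mpr hki))
    by_contra! hki
    exact hσ ⟨j, i, k, mem_Iio.mp hji, hik.lt_of_ne (by rintro rfl; exact hki.false), hki, hij⟩
  · rw [nextValue_of_notMem hmax]
    obtain ⟨j, hji, hj⟩ := exists_eq_prefixMax σ i
    obtain rfl : j = i := hji.eq_of_not_lt fun hlt =>
      hmax (hj ▸ mem_image_of_mem σ (mem_Iio.mpr hlt))
    exact hj

lemma eq_greedy_prefixMax {σ : Equiv.Perm (Fin m)} (hσ : Avoids321 ⇑σ) :
    ⇑σ = greedy (prefixMax σ) :=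
  (isGreedyFor_prefixMax hσ).unique (isGreedyFor_greedy _)

lemma card_image_Iio_le {α : Type*} [DecidableEq α] (g : Fin m → α) (i : Fin m) :
    ((Iio i).image g).card ≤ i :=
  card_image_le.trans_eq (Fin.card_Iio i)

lemma compl_image_Iio_nonempty (g : Fin m → Fin m) (i : Fin m) :
    ((Iio i).image g)ᶜ.Nonempty := by
  rw [← card_pos, card_compl, Fintype.card_fin]
  have := card_image_Iio_le g i
  omega

namespace IsGreedyFor

variable {t g : Fin m → Fin m}

lemma apply_notMem (hg : IsGreedyFor t g) (i : Fin m) : g i ∉ (Iio i).image g := by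
  rw [hg i]
  exact nextValue_notMem (compl_image_Iio_nonempty g i)

lemma injective (hg : IsGreedyFor t g) : Function.Injective g := by
  have key : ∀ {i j}, i < j → g i ≠ g j := fun hij heq =>
    hg.apply_notMem _ (heq ▸ mem_image_of_mem g (mem_Iio.mpr hij))
  intro i j hij
  by_contra hne
  rcases lt_or_gt_of_ne hne with h | h
  · exact key h hij
  · exact key h hij.symm

/-- Below a repeated target `t i`, the `i` earlier values cannot fill all of `Iic (t i)`. -/
lemma le_of_isStair (hg : IsGreedyFor t g) (ht : IsStair t) (i : Fin m) : g i ≤ t i := by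
  induction i using WellFoundedLT.induction with
  | _ i ih =>
  by_cases hv : t i ∈ (Iio i).image g
  · have hsub : (Iio i).image g ⊆ Iic (t i) := fun y hy => by
      obtain ⟨j, hj, rfl⟩ := mem_image.mp hy
      exact mem_Iic.mpr ((ih j (mem_Iio.mp hj)).trans (ht.1 (mem_Iio.mp hj).le))
    have hcard : ((Iio i).image g).card < (Iic (t i)).card := by
      have := card_image_Iio_le g i
      rw [Fin.card_Iic]
      have := Fin.le_def.mp (ht.2 i)
      omega
    obtain ⟨x, hx, hxu⟩ := exists_mem_notMem_of_card_lt_card hcard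
    rw [hg i, nextValue_of_mem hv ⟨x, mem_compl.mpr hxu⟩]
    exact (min'_le _ x (mem_compl.mpr hxu)).trans (mem_Iic.mp hx)
  · rw [hg i, nextValue_of_notMem hv]

lemma mem_image_Iic (hg : IsGreedyFor t g) (i : Fin m) : t i ∈ (Iic i).image g := by
  by_cases hv : t i ∈ (Iio i).image g
  · exact image_subset_image Iio_subset_Iic_self hv
  · exact mem_image.mpr ⟨i, mem_Iic.mpr le_rfl, by rw [hg i, nextValue_of_notMem hv]⟩

lemma prefixMax_eq (hg : IsGreedyFor t g) (ht : IsStair t) : prefixMax g = t := by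
  funext i
  refine le_antisymm (sup'_le _ _ fun j hj => ?_) ?_
  · exact (hg.le_of_isStair ht j).trans (ht.1 (mem_Iic.mp hj))
  · obtain ⟨j, hj, hji⟩ := mem_image.mp (hg.mem_image_Iic i)
    exact hji ▸ le_prefixMax g (mem_Iic.mp hj)

/-- A value below its target `t i` is the least one not used before position `i`, so no later
value can be smaller. -/
lemma avoids321 (hg : IsGreedyFor t g) (ht : IsStair t) : Avoids321 g := by
  rintro ⟨j, i, k, hji, hik, hki, hij⟩
  have hlt : g i < t i := hij.trans_le ((hg.le_of_isStair ht j).trans (ht.1 hji.le))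
  have hv : t i ∈ (Iio i).image g := by
    by_contra hv
    rw [hg i, nextValue_of_notMem hv] at hlt
    exact hlt.false
  have hk : g k ∈ ((Iio i).image g)ᶜ := mem_compl.mpr fun h =>
    hg.apply_notMem k (image_subset_image (Iio_subset_Iio hik.le) h)
  have hmin := min'_le _ _ hk
  rw [← nextValue_of_mem hv ⟨_, hk⟩, ← hg i] at hmin
  exact hki.not_ge hmin

end IsGreedyFor

noncomputable def greedyPerm (t : Fin m → Fin m) : Equiv.Perm (Fin m) :=
  Equiv.ofBijective (greedy t)
    (Finite.injective_iff_bijective.mp (isGreedyFor_greedy t).injective)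

noncomputable def avoids321EquivStair : {σ : Equiv.Perm (Fin m) // Avoids321 ⇑σ} ≃ Stair m where
  toFun σ := ⟨prefixMax σ.1, isStair_prefixMax σ.1⟩
  invFun t := ⟨greedyPerm t.1, (isGreedyFor_greedy t.1).avoids321 t.2⟩
  left_inv σ := Subtype.ext <| Equiv.ext fun i => congrFun (eq_greedy_prefixMax σ.2).symm i
  right_inv t := Subtype.ext <| (isGreedyFor_greedy t.1).prefixMax_eq t.2

/-- The number of permutations of `{1,…,m}` with no descending subsequence of length 3
(3-good, i.e. 321-avoiding, permutations) equals the `m`-th Catalan number. -/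
theorem card_three_good_perms_eq_catalan (m : ℕ) :
    Nat.card {σ : Equiv.Perm (Fin m) //
      ¬ ∃ i₁ i₂ i₃ : Fin m, i₁ < i₂ ∧ i₂ < i₃ ∧ σ i₃ < σ i₂ ∧ σ i₂ < σ i₁}
      = catalan m :=
  (Nat.card_congr avoids321EquivStair).trans (card_stair m)
end

section
/- For commuting variables z₁, …, z_n, one has the identity Σ_{σ ∈ S_n} ∏_{i<j} (1 − z_{σ(i)}⁻¹ z_{σ(j)}) = ∏_{i≠j} (1 − z_i⁻¹ z_j), as identities of Laurent polynomials (equivalently rational functions) in z₁,…,z_n. -/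
/-!
Put `w = z⁻¹` and write `V(x) = ∏_{i<j} (x_j - x_i)` for the Vandermonde determinant.
Since `1 - z_a⁻¹ z_b = z_b (w_b - w_a)`, the term of `σ` on the left is
`sign σ · ∏_j z_{σ(j)}^j · V(w)`, so the left side is the Leibniz expansion of `V(z)`
times `V(w)`.
On the right, pairing the factors of `(i, j)` and `(j, i)` gives
`(1 - z_i⁻¹ z_j)(1 - z_j⁻¹ z_i) = (z_j - z_i)(w_j - w_i)`, so it is `V(z) V(w)` as well.
-/

open Finset Matrix Equiv

section PairProducts

variable {ι M : Type*} [Fintype ι] [LinearOrder ι] [CommMonoid M]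

theorem prod_filter_lt_eq_prod_prod_Ioi [LocallyFiniteOrderTop ι] (f : ι → ι → M) :
    ∏ p ∈ univ.filter (fun p : ι × ι => p.1 < p.2), f p.1 p.2
      = ∏ i, ∏ j ∈ Ioi i, f i j :=
  prod_finset_product' _ _ _ (by simp)

theorem prod_filter_lt_snd_eq_prod_pow [LocallyFiniteOrderBot ι] (g : ι → M) :
    ∏ p ∈ univ.filter (fun p : ι × ι => p.1 < p.2), g p.2 = ∏ j, g j ^ #(Iio j) := by
  rw [prod_finset_product_right' _ univ (fun j => Iio j) (by simp) (f := fun _ j => g j)]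
  simp only [prod_const]

theorem prod_filter_ne_eq_prod_filter_lt_mul_swap (f : ι → ι → M) :
    ∏ p ∈ univ.filter (fun p : ι × ι => p.1 ≠ p.2), f p.1 p.2
      = ∏ p ∈ univ.filter (fun p : ι × ι => p.1 < p.2), f p.1 p.2 * f p.2 p.1 := by
  have hsplit : univ.filter (fun p : ι × ι => p.1 ≠ p.2)
      = univ.filter (fun p : ι × ι => p.1 < p.2)
        ∪ univ.filter (fun p : ι × ι => p.2 < p.1) := by
    rw [← filter_or]
    exact filter_congr fun p _ => ne_iff_lt_or_gt
  have hdisj : Disjoint (univ.filter fun p : ι × ι => p.1 < p.2)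
      (univ.filter fun p : ι × ι => p.2 < p.1) :=
    disjoint_filter.2 fun _ _ h => h.asymm
  have hswap : ∏ p ∈ univ.filter (fun p : ι × ι => p.2 < p.1), f p.1 p.2
      = ∏ p ∈ univ.filter (fun p : ι × ι => p.1 < p.2), f p.2 p.1 :=
    prod_nbij' Prod.swap Prod.swap (by simp) (by simp) (by simp) (by simp) (by simp)
  rw [hsplit, prod_union hdisj, hswap, prod_mul_distrib]

end PairProducts

theorem det_vandermonde_comp_perm {R : Type*} [CommRing R] {n : ℕ} (v : Fin n → R)
    (σ : Perm (Fin n)) :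
    det (vandermonde (v ∘ σ)) = Perm.sign σ * det (vandermonde v) := by
  rw [← det_permute σ]
  rfl

section InvVandermonde

variable {K : Type*} [Field K]

theorem one_sub_inv_mul_eq_mul_inv_sub_inv (a : K) {b : K} (hb : b ≠ 0) :
    1 - a⁻¹ * b = b * (b⁻¹ - a⁻¹) := by
  rw [mul_sub, mul_inv_cancel₀ hb, mul_comm]

theorem one_sub_inv_mul_mul_one_sub_inv_mul {a b : K} (ha : a ≠ 0) (hb : b ≠ 0) :
    (1 - a⁻¹ * b) * (1 - b⁻¹ * a) = (b - a) * (b⁻¹ - a⁻¹) := by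
  field_simp

variable {n : ℕ} {z : Fin n → K}

theorem prod_filter_lt_one_sub_inv_mul (hz : ∀ i, z i ≠ 0) :
    ∏ p ∈ univ.filter (fun p : Fin n × Fin n => p.1 < p.2), (1 - (z p.1)⁻¹ * z p.2)
      = (∏ j, z j ^ (j : ℕ)) * det (vandermonde z⁻¹) := by
  simp_rw [one_sub_inv_mul_eq_mul_inv_sub_inv _ (hz _), prod_mul_distrib,
    prod_filter_lt_snd_eq_prod_pow z, Fin.card_Iio, det_vandermonde, Pi.inv_apply]
  rw [prod_filter_lt_eq_prod_prod_Ioi (fun i j => (z j)⁻¹ - (z i)⁻¹)]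

theorem prod_filter_ne_one_sub_inv_mul (hz : ∀ i, z i ≠ 0) :
    ∏ p ∈ univ.filter (fun p : Fin n × Fin n => p.1 ≠ p.2), (1 - (z p.1)⁻¹ * z p.2)
      = det (vandermonde z) * det (vandermonde z⁻¹) := by
  rw [prod_filter_ne_eq_prod_filter_lt_mul_swap (fun a b => 1 - (z a)⁻¹ * z b)]
  simp_rw [one_sub_inv_mul_mul_one_sub_inv_mul (hz _) (hz _), prod_mul_distrib,
    det_vandermonde, Pi.inv_apply]
  rw [prod_filter_lt_eq_prod_prod_Ioi (fun i j => z j - z i),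
    prod_filter_lt_eq_prod_prod_Ioi (fun i j => (z j)⁻¹ - (z i)⁻¹)]

end InvVandermonde

/-- The Laurent-polynomial identity
`Σ_{σ ∈ S_n} ∏_{i<j} (1 − z_{σ(i)}⁻¹ z_{σ(j)}) = ∏_{i≠j} (1 − z_i⁻¹ z_j)`,
stated for arbitrary nonzero values `z₁, …, z_n` in an arbitrary field. -/
theorem sum_perm_prod_eq_prod_offDiag
    {F : Type*} [Field F] (n : ℕ) (z : Fin n → F) (hz : ∀ i, z i ≠ 0) :
    ∑ σ : Equiv.Perm (Fin n),
        ∏ p ∈ Finset.univ.filter (fun p : Fin n × Fin n => p.1 < p.2),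
          (1 - (z (σ p.1))⁻¹ * z (σ p.2))
      = ∏ p ∈ Finset.univ.filter (fun p : Fin n × Fin n => p.1 ≠ p.2),
          (1 - (z p.1)⁻¹ * z p.2) := by
  calc _ = ∑ σ : Perm (Fin n),
          (∏ j, z (σ j) ^ (j : ℕ)) * det (vandermonde (z⁻¹ ∘ σ)) :=
        sum_congr rfl fun σ _ => prod_filter_lt_one_sub_inv_mul (z := z ∘ σ) fun i => hz (σ i)
    _ = ∑ σ : Perm (Fin n),
          Perm.sign σ * (∏ j, z (σ j) ^ (j : ℕ)) * det (vandermonde z⁻¹) := by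
        refine sum_congr rfl fun σ _ => ?_
        rw [det_vandermonde_comp_perm, mul_left_comm, mul_assoc]
    _ = det (vandermonde z) * det (vandermonde z⁻¹) := by
        rw [← sum_mul, det_apply' (vandermonde z)]
        rfl
    _ = _ := (prod_filter_ne_one_sub_inv_mul hz).symm
end
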